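/- Four-points property: Let d_ψ be a Bregman divergence that is jointly convex in both arguments on A × B. For p ∈ A, let q* = argmin_{q∈B} d_ψ(p, q). Then for all u ∈ A and v ∈ B: δ_ψ(u, p) + d_ψ(u, v) ≥ d_ψ(u, q*), where δ_ψ(u,p) = ψ(u) − ψ(p) − ⟨∇ψ(p), u − p⟩. -/

import Mathlib

/-!
Put `q_t = (1 - t) q* + t v` and `p_t = (1 - t) p + t u`. The convexity gap of `ψ` at `p_t` is at
most `t δ_ψ(u, p)`, so joint convexity of `d_ψ` at `(p_t, q_t)` together with the minimality
`d_ψ(p, q*) ≤ d_ψ(p, q_t)` gives `d_ψ(u, q_t) ≤ δ_ψ(u, p) + d_ψ(u, v)` for `0 < t ≤ 1`.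
Letting `t → 0` needs continuity of `q ↦ d_ψ(u, q)`, i.e. of `∇ψ`: the gradient of a
differentiable convex function is continuous, because the difference quotients
`(ψ(x + s w) - ψ(x)) / s` bound `⟪w, ∇ψ x⟫` from above and depend continuously on `x`.
-/

open scoped RealInnerProductSpace BigOperators

/-- The Bregman divergence associated to a convex function `ψ` with gradient map `g`.
Note that `δ_ψ(u, p) = bregman ψ g u p`. -/
noncomputable def bregman {k : ℕ} (ψ : EuclideanSpace ℝ (Fin k) → ℝ)
    (g : EuclideanSpace ℝ (Fin k) → EuclideanSpace ℝ (Fin k))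
    (p q : EuclideanSpace ℝ (Fin k)) : ℝ :=
  ψ p - ψ q - ⟪p - q, g q⟫

open Set Filter Topology

section Gradient

variable {F : Type*} [NormedAddCommGroup F] [InnerProductSpace ℝ F] [CompleteSpace F]
  {f : F → ℝ} {g : F → F}

theorem HasGradientAt.hasDerivAt_add_smul {x g' : F} (h : HasGradientAt f g' x) (w : F) :
    HasDerivAt (fun t : ℝ => f (x + t • w)) ⟪w, g'⟫ 0 := by
  have h' := h.hasFDerivAt.hasLineDerivAt w
  unfold HasLineDerivAt at h'
  simpa [real_inner_comm] using h'

theorem ConvexOn.add_inner_gradient_le (hf : ConvexOn ℝ univ f) {x g' : F}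
    (h : HasGradientAt f g' x) (y : F) : f x + ⟪y - x, g'⟫ ≤ f y := by
  have hline : ConvexOn ℝ univ fun t : ℝ => f (x + t • (y - x)) := by
    simpa [Function.comp_def, AffineMap.lineMap_apply_module', add_comm] using
      hf.comp_affineMap (AffineMap.lineMap x y)
  have := hline.le_slope_of_hasDerivAt (mem_univ 0) (mem_univ 1) one_pos
    (h.hasDerivAt_add_smul (y - x))
  simp only [slope_def_field, one_smul, zero_smul, add_zero, add_sub_cancel] at this
  linarith

theorem ConvexOn.eventually_inner_gradient_lt (hf : ConvexOn ℝ univ f)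
    (hg : ∀ x, HasGradientAt f (g x) x) (y w : F) {a : ℝ} (ha : ⟪w, g y⟫ < a) :
    ∀ᶠ x in 𝓝 y, ⟪w, g x⟫ < a := by
  have hslope := hasDerivAt_iff_tendsto_slope.1 ((hg y).hasDerivAt_add_smul w)
  obtain ⟨s, hs_lt, hs_pos⟩ :=
    (((hslope.mono_left (nhdsGT_le_nhdsNE 0)).eventually (gt_mem_nhds ha)).and
      self_mem_nhdsWithin).exists
  have hf_cont : Continuous f := continuous_iff_continuousAt.2 fun x => (hg x).continuousAt
  have hquot : ContinuousAt (fun x => (f (x + s • w) - f x) / s) y := by fun_prop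
  simp only [slope_def_field, zero_smul, add_zero, sub_zero] at hs_lt
  filter_upwards [hquot.eventually (gt_mem_nhds hs_lt)] with x hx
  have hgrad := hf.add_inner_gradient_le (hg x) (x + s • w)
  rw [add_sub_cancel_left, real_inner_smul_left] at hgrad
  exact lt_of_le_of_lt ((le_div_iff₀' (mem_Ioi.1 hs_pos)).2 (by linarith)) hx

theorem ConvexOn.tendsto_inner_gradient (hf : ConvexOn ℝ univ f)
    (hg : ∀ x, HasGradientAt f (g x) x) (y w : F) :
    Tendsto (fun x => ⟪w, g x⟫) (𝓝 y) (𝓝 ⟪w, g y⟫) := by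
  refine tendsto_order.2 ⟨fun a ha => ?_, fun a ha => hf.eventually_inner_gradient_lt hg y w ha⟩
  have := hf.eventually_inner_gradient_lt hg y (-w) (a := -a) (by simpa [inner_neg_left] using ha)
  simpa [inner_neg_left] using this

theorem ConvexOn.continuous_gradient [FiniteDimensional ℝ F] (hf : ConvexOn ℝ univ f)
    (hg : ∀ x, HasGradientAt f (g x) x) : Continuous g := by
  let b := stdOrthonormalBasis ℝ F
  have hcoord (i) : Continuous fun x => ⟪b i, g x⟫ :=
    continuous_iff_continuousAt.2 fun y => hf.tendsto_inner_gradient hg y (b i)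
  have hg_eq : g = fun x => ∑ i, ⟪b i, g x⟫ • b i := funext fun x => (b.sum_repr' (g x)).symm
  rw [hg_eq]
  fun_prop

end Gradient

section Bregman

variable {k : ℕ} {ψ : EuclideanSpace ℝ (Fin k) → ℝ}
  {gψ : EuclideanSpace ℝ (Fin k) → EuclideanSpace ℝ (Fin k)}

theorem continuous_bregman_right (hψ : ConvexOn ℝ univ ψ) (hg : ∀ x, HasGradientAt ψ (gψ x) x)
    (u : EuclideanSpace ℝ (Fin k)) : Continuous (bregman ψ gψ u) := by
  have hψ_cont : Continuous ψ := continuous_iff_continuousAt.2 fun x => (hg x).continuousAt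
  have hg_cont := hψ.continuous_gradient hg
  unfold bregman
  fun_prop

theorem bregman_smul_add_smul_left_ge (hψ : ConvexOn ℝ univ ψ) {p : EuclideanSpace ℝ (Fin k)}
    (hp : HasGradientAt ψ (gψ p) p) (u q : EuclideanSpace ℝ (Fin k)) (t : ℝ) :
    (1 - t) * bregman ψ gψ p q + t * bregman ψ gψ u q - t * bregman ψ gψ u p ≤
      bregman ψ gψ ((1 - t) • p + t • u) q := by
  have hgrad := hψ.add_inner_gradient_le hp ((1 - t) • p + t • u)
  have hsplit : ((1 - t) • p + t • u) - q = (1 - t) • (p - q) + t • (u - q) := by module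
  have hstep : ((1 - t) • p + t • u) - p = t • (u - p) := by module
  rw [hstep, real_inner_smul_left] at hgrad
  simp only [bregman, hsplit, inner_add_left, real_inner_smul_left]
  linarith

theorem bregman_smul_add_smul_right_le {A B : Set (EuclideanSpace ℝ (Fin k))} (hB : Convex ℝ B)
    (hψ : ConvexOn ℝ univ ψ) (hg : ∀ x, HasGradientAt ψ (gψ x) x)
    (hjc : ConvexOn ℝ (A ×ˢ B) fun z :
        EuclideanSpace ℝ (Fin k) × EuclideanSpace ℝ (Fin k) => bregman ψ gψ z.1 z.2)
    {p u q v : EuclideanSpace ℝ (Fin k)} (hp : p ∈ A) (hu : u ∈ A) (hq : q ∈ B) (hv : v ∈ B)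
    (hmin : IsMinOn (bregman ψ gψ p) B q) {t : ℝ} (ht₀ : 0 < t) (ht₁ : t ≤ 1) :
    bregman ψ gψ u ((1 - t) • q + t • v) ≤ bregman ψ gψ u p + bregman ψ gψ u v := by
  set qt := (1 - t) • q + t • v
  have hjoint : bregman ψ gψ ((1 - t) • p + t • u) qt ≤
      (1 - t) * bregman ψ gψ p q + t * bregman ψ gψ u v := by
    simpa using hjc.2 (mk_mem_prod hp hq) (mk_mem_prod hu hv) (by linarith) ht₀.le (by ring)
  have hmin_qt : bregman ψ gψ p q ≤ bregman ψ gψ p qt :=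
    isMinOn_iff.1 hmin qt (hB hq hv (by linarith) ht₀.le (by ring))
  have hgap := bregman_smul_add_smul_left_ge hψ (hg p) u qt t
  have : t * bregman ψ gψ u qt ≤ t * (bregman ψ gψ u p + bregman ψ gψ u v) := by
    linarith [mul_le_mul_of_nonneg_left hmin_qt (sub_nonneg.2 ht₁)]
  exact le_of_mul_le_mul_left this ht₀

end Bregman

theorem four_points_property_general {k : ℕ}
    (A B : Set (EuclideanSpace ℝ (Fin k)))
    (hB : Convex ℝ B)
    (ψ : EuclideanSpace ℝ (Fin k) → ℝ)
    (gψ : EuclideanSpace ℝ (Fin k) → EuclideanSpace ℝ (Fin k))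
    (hψ : StrictConvexOn ℝ Set.univ ψ)
    (hg : ∀ x, HasGradientAt ψ (gψ x) x)
    (hjc : ConvexOn ℝ (A ×ˢ B) fun z :
        EuclideanSpace ℝ (Fin k) × EuclideanSpace ℝ (Fin k) => bregman ψ gψ z.1 z.2)
    (p : EuclideanSpace ℝ (Fin k)) (hp : p ∈ A)
    (qstar : EuclideanSpace ℝ (Fin k)) (hq : qstar ∈ B)
    (hmin : ∀ q ∈ B, bregman ψ gψ p qstar ≤ bregman ψ gψ p q) :
    ∀ u ∈ A, ∀ v ∈ B,
      bregman ψ gψ u p + bregman ψ gψ u v ≥ bregman ψ gψ u qstar := by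
  intro u hu v hv
  have hlim : Tendsto (fun t : ℝ => bregman ψ gψ u ((1 - t) • qstar + t • v)) (𝓝[>] 0)
      (𝓝 (bregman ψ gψ u qstar)) := by
    have hcont := (continuous_bregman_right hψ.convexOn hg u).comp
      (by fun_prop : Continuous fun t : ℝ => (1 - t) • qstar + t • v)
    simpa [Function.comp_def] using (hcont.tendsto 0).mono_left nhdsWithin_le_nhds
  refine le_of_tendsto hlim ?_
  filter_upwards [Ioc_mem_nhdsGT one_pos] with t ht
  exact bregman_smul_add_smul_right_le hB hψ.convexOn hg hjc hp hu hq hv (isMinOn_iff.2 hmin)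
    ht.1 ht.2

/-- the four-points property.  If the Bregman divergence `d_ψ` is jointly
convex on `A × B` and `q*` minimizes `q ↦ d_ψ(p, q)` over the closed convex set `B`
(so `⟪∇_q d_ψ(p, q*), v − q*⟫ ≥ 0` for all `v ∈ B`), then for all `u ∈ A`, `v ∈ B`:
`δ_ψ(u, p) + d_ψ(u, v) ≥ d_ψ(u, q*)`. -/
theorem four_points_property {k : ℕ}
    (A B : Set (EuclideanSpace ℝ (Fin k)))
    (hA : Convex ℝ A) (hB : Convex ℝ B)
    (hAc : IsClosed A) (hBc : IsClosed B)
    (ψ : EuclideanSpace ℝ (Fin k) → ℝ)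
    (gψ : EuclideanSpace ℝ (Fin k) → EuclideanSpace ℝ (Fin k))
    (hψ : StrictConvexOn ℝ Set.univ ψ)
    (hg : ∀ x, HasGradientAt ψ (gψ x) x)
    (hjc : ConvexOn ℝ (A ×ˢ B) fun z :
        EuclideanSpace ℝ (Fin k) × EuclideanSpace ℝ (Fin k) => bregman ψ gψ z.1 z.2)
    (p : EuclideanSpace ℝ (Fin k)) (hp : p ∈ A)
    (qstar : EuclideanSpace ℝ (Fin k)) (hq : qstar ∈ B)
    (hmin : ∀ q ∈ B, bregman ψ gψ p qstar ≤ bregman ψ gψ p q)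
    (gq : EuclideanSpace ℝ (Fin k))
    (hgq : HasGradientAt (fun q => bregman ψ gψ p q) gq qstar)
    (hopt : ∀ v ∈ B, 0 ≤ ⟪gq, v - qstar⟫) :
    ∀ u ∈ A, ∀ v ∈ B,
      bregman ψ gψ u p + bregman ψ gψ u v ≥ bregman ψ gψ u qstar :=
  four_points_property_general A B hB ψ gψ hψ hg hjc p hp qstar hq hmin
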